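/- arXiv:2405.13561 — 2 statements merged into one kernel-verified Lean document; each statement's English description precedes it below -/
import Mathlib

section
/- For a uniformly random binary word of length n, the number of occurrences of HT (indices i with w_i = H and w_{i+1} = T) equals k with probability C(n+1, 2k+1)/2^n. -/
/-!
Condition on the first letter. Prepending `H` to a word that starts with `T` creates one
occurrence of `HT`, and every other prepending creates none. Hence, by induction on the length,
among the words of length `n + 1` with `k` occurrences of `HT` exactly `C(n+1, 2k)` start with `H`
and `C(n+1, 2k+1)` start with `T`, both counts following from Pascal's rule. Finally, a word of
length `n` has as many occurrences of `HT` as the same word with a `T` prepended.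
-/

/-- Number of occurrences of the two-letter pattern `p q` in the word `w`
(indices `i` with `w i = p` and `w (i+1) = q`). `H = true`, `T = false`. -/
def cnt {n : ℕ} (w : Fin n → Bool) (p q : Bool) : ℕ :=
  (Finset.univ.filter (fun i : Fin n =>
    ∃ j : Fin n, (j : ℕ) = (i : ℕ) + 1 ∧ w i = p ∧ w j = q)).card

open Finset

theorem card_filter_fin_cons {α : Type*} [Fintype α] {n : ℕ}
    (P : (Fin (n + 1) → α) → Prop) [DecidablePred P] :
    #{w | P w} = ∑ a, #{v : Fin n → α | P (Fin.cons a v)} := by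
  simp only [card_filter]
  rw [← (Fin.consEquiv fun _ => α).sum_comp, Fintype.sum_prod_type]
  rfl

theorem cnt_eq_zero_of_le_one {n : ℕ} (hn : n ≤ 1) (w : Fin n → Bool) (p q : Bool) :
    cnt w p q = 0 := by
  simp only [cnt, card_eq_zero, filter_eq_empty_iff]
  omega

theorem cnt_cons (b : Bool) {n : ℕ} (v : Fin (n + 1) → Bool) (p q : Bool) :
    cnt (Fin.cons b v : Fin (n + 2) → Bool) p q
      = (if b = p ∧ v 0 = q then 1 else 0) + cnt v p q := by
  rw [cnt, Fin.card_filter_univ_succ', cnt]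
  simp [Fin.exists_fin_succ]

theorem cnt_cons_of_ne {b p : Bool} (h : b ≠ p) {n : ℕ} (v : Fin n → Bool) (q : Bool) :
    cnt (Fin.cons b v : Fin (n + 1) → Bool) p q = cnt v p q := by
  cases n with
  | zero => rw [cnt_eq_zero_of_le_one le_rfl, cnt_eq_zero_of_le_one zero_le_one]
  | succ n => simp [cnt_cons, h]

theorem card_cnt_true_false_cons (n k : ℕ) (b : Bool) :
    #{v : Fin n → Bool | cnt (Fin.cons b v : Fin (n + 1) → Bool) true false = k}
      = if b then (n + 1).choose (2 * k) else (n + 1).choose (2 * k + 1) := by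
  induction n generalizing k b with
  | zero =>
    simp only [cnt_eq_zero_of_le_one le_rfl]
    rcases k with _ | k
    · cases b <;> simp
    · rw [Nat.choose_eq_zero_of_lt (by omega : 1 < 2 * (k + 1)),
        Nat.choose_eq_zero_of_lt (by omega : 1 < 2 * (k + 1) + 1)]
      simp
  | succ n ih =>
    rw [card_filter_fin_cons, Fintype.sum_bool]
    simp only [cnt_cons, Fin.cons_zero]
    cases b with
    | false =>
      simp only [Bool.false_eq_true, false_and, if_false, if_true, zero_add, ih]
      exact (Nat.choose_succ_succ' _ _).symm
    | true =>
      simp only [true_and, Bool.true_eq_false, if_false, zero_add, if_true, ih]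
      cases k with
      | zero => simp
      | succ k =>
        simp only [add_comm 1, Nat.add_right_cancel_iff, ih, Bool.false_eq_true, if_false]
        rw [mul_add, mul_one, Nat.choose_succ_succ' (n + 1) (2 * k + 1), add_comm]

theorem stmt4 (n k : ℕ) :
    ((Finset.univ.filter (fun w : Fin n → Bool => cnt w true false = k)).card : ℚ) / 2 ^ n
      = (Nat.choose (n + 1) (2 * k + 1) : ℚ) / 2 ^ n := by
  have key := card_cnt_true_false_cons n k false
  simp only [cnt_cons_of_ne Bool.false_ne_true, Bool.false_eq_true, if_false] at key
  rw [key]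
end

section
/- For all n ≥ 2, the probability that the number of HH occurrences strictly exceeds the number of HT occurrences in n fair coin tosses is at most 1/2 − 1/2^n. -/
open Finset

namespace LittGame

/-- Contribution of the adjacent pair `a b` to `#HT - #HH`. -/
def pairScore (a b : Bool) : ℤ := if a then (if b then -1 else 1) else 0

/-- `#HT - #HH` in the word `s :: w`. -/
def lead : {m : ℕ} → Bool → (Fin m → Bool) → ℤ
  | 0, _, _ => 0
  | _ + 1, a, w => pairScore a (w 0) + lead (w 0) (Fin.tail w)

lemma cnt_succ_succ {m : ℕ} (w : Fin (m + 2) → Bool) (p q : Bool) :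
    cnt w p q = (if w 0 = p ∧ w 1 = q then 1 else 0) + cnt (Fin.tail w) p q := by
  unfold cnt
  rw [card_filter, card_filter, Fin.sum_univ_succ]
  simp only [Fin.exists_fin_succ]
  simp [Fin.val_succ, Fin.tail]

lemma cnt_fin_one (w : Fin 1 → Bool) (p q : Bool) : cnt w p q = 0 := by
  simp [cnt]

lemma cnt_sub_cnt_eq_lead {m : ℕ} (w : Fin (m + 1) → Bool) :
    (cnt w true false : ℤ) - cnt w true true = lead (w 0) (Fin.tail w) := by
  induction m with
  | zero => simp [cnt_fin_one, lead]
  | succ m ih =>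
    rw [cnt_succ_succ, cnt_succ_succ, lead, ← ih]
    simp only [Fin.tail, Fin.succ_zero_eq_one]
    cases w 0 <;> cases w 1 <;> simp [pairScore] <;> ring

lemma pairScore_le_one (a b : Bool) : pairScore a b ≤ 1 := by
  cases a <;> cases b <;> decide

lemma neg_one_le_pairScore (a b : Bool) : -1 ≤ pairScore a b := by
  cases a <;> cases b <;> decide

def walkSum (φ : ℤ → ℤ) (m : ℕ) (s : Bool) (j : ℤ) : ℤ :=
  ∑ w : Fin m → Bool, φ (j + lead s w)

lemma walkSum_zero (φ : ℤ → ℤ) (s : Bool) (j : ℤ) : walkSum φ 0 s j = φ j := by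
  simp [walkSum, lead]

lemma walkSum_succ (φ : ℤ → ℤ) (m : ℕ) (s : Bool) (j : ℤ) :
    walkSum φ (m + 1) s j = ∑ b : Bool, walkSum φ m b (j + pairScore s b) := by
  rw [walkSum, ← (Fin.consEquiv fun _ => Bool).sum_comp, Fintype.sum_prod_type]
  simp [walkSum, lead, Fin.consEquiv, add_assoc]

lemma walkSum_one_add (φ : ℤ → ℤ) (m : ℕ) (s : Bool) (j : ℤ) :
    walkSum (fun d => 1 + φ d) m s j = 2 ^ m + walkSum φ m s j := by
  simp [walkSum, sum_add_distrib]

lemma walkSum_one_sub (φ : ℤ → ℤ) (m : ℕ) (s : Bool) (j : ℤ) :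
    walkSum (fun d => 1 - φ d) m s j = 2 ^ m - walkSum φ m s j := by
  simp [walkSum, sum_sub_distrib]

/-- The number of words of length `ℓ` along which the walk started at level `d` after the letter
`s`, moving by `pairScore`, first hits level `0` at its last letter. -/
def firstPassage : ℤ → ℕ → Bool → ℕ
  | d, 0, _ => if d = 0 then 1 else 0
  | d, ℓ + 1, s => if d = 0 then 0 else ∑ b : Bool, firstPassage (d + pairScore s b) ℓ b

/-- The last letter of a first passage counted by `firstPassage d ℓ s`: an up-step is `HT`, a
down-step is `HH`. -/
def passageEnd (d : ℤ) (s : Bool) : Bool :=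
  if d < 0 then false else if 0 < d then true else s

lemma firstPassage_zero_left (ℓ : ℕ) (s : Bool) :
    firstPassage 0 ℓ s = if ℓ = 0 then 1 else 0 := by
  cases ℓ <;> simp [firstPassage]

lemma firstPassage_zero_right {d : ℤ} (hd : d ≠ 0) (s : Bool) : firstPassage d 0 s = 0 := by
  simp [firstPassage, hd]

lemma firstPassage_succ {d : ℤ} (hd : d ≠ 0) (ℓ : ℕ) (s : Bool) :
    firstPassage d (ℓ + 1) s = ∑ b : Bool, firstPassage (d + pairScore s b) ℓ b := by
  simp [firstPassage, hd]

lemma firstPassage_false_succ {d : ℤ} (hd : d ≠ 0) (ℓ : ℕ) :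
    firstPassage d (ℓ + 1) false = firstPassage d ℓ true + firstPassage d ℓ false := by
  simp [firstPassage_succ hd, pairScore]

lemma passageEnd_zero (s : Bool) : passageEnd 0 s = s := by simp [passageEnd]

lemma passageEnd_add_pairScore {d : ℤ} (hd : d ≠ 0) (s b : Bool) :
    passageEnd (d + pairScore s b) b = passageEnd d s := by
  unfold passageEnd pairScore
  cases s <;> cases b <;> split_ifs <;> simp_all <;> omega

lemma sum_firstPassage_zero_mul (f : ℕ → ℤ) (m : ℕ) (s : Bool) :
    ∑ p ∈ antidiagonal m, (firstPassage 0 p.1 s : ℤ) * f p.2 = f m := by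
  rw [Nat.sum_antidiagonal_eq_sum_range_succ_mk, sum_range_succ']
  simp [firstPassage_zero_left]

/-- Splitting a walk at its first passage through level `c`: by `hR` a walk started in `R` cannot
leave `R` without hitting `c`, and by `hzero` it cannot end inside `R`. -/
theorem eq_sum_firstPassage_mul {X : ℕ → Bool → ℤ → ℤ} {R : Set ℤ} (c : ℤ)
    (hrec : ∀ m s j, j ∈ R → X (m + 1) s j = ∑ b : Bool, X m b (j + pairScore s b))
    (hzero : ∀ s j, j ∈ R → X 0 s j = 0)
    (hR : ∀ j ∈ R, ∀ s b, j + pairScore s b ∈ R ∨ j + pairScore s b = c) :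
    ∀ m s j, j ∈ R ∨ j = c →
      X m s j = ∑ p ∈ antidiagonal m,
        (firstPassage (j - c) p.1 s : ℤ) * X p.2 (passageEnd (j - c) s) c := by
  intro m
  induction m with
  | zero =>
    intro s j hj
    rcases eq_or_ne j c with rfl | hjc
    · rw [sub_self, passageEnd_zero, sum_firstPassage_zero_mul (X · s j)]
    · simp [hzero s j (hj.resolve_right hjc), firstPassage_zero_right (sub_ne_zero.2 hjc)]
  | succ m ih =>
    intro s j hj
    rcases eq_or_ne j c with rfl | hjc
    · rw [sub_self, passageEnd_zero, sum_firstPassage_zero_mul (X · s j)]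
    have hd : j - c ≠ 0 := sub_ne_zero.2 hjc
    have hjR : j ∈ R := hj.resolve_right hjc
    rw [hrec m s j hjR, Nat.sum_antidiagonal_succ, firstPassage_zero_right hd, Nat.cast_zero,
      zero_mul, zero_add]
    simp_rw [firstPassage_succ hd, Nat.cast_sum, sum_mul]
    rw [sum_comm]
    refine sum_congr rfl fun b _ => ?_
    rw [ih b _ (hR j hjR s b), ← passageEnd_add_pairScore hd s b, sub_add_eq_add_sub]

lemma firstPassage_neg_two (ℓ : ℕ) :
    (firstPassage (-2) ℓ true : ℤ) = ∑ p ∈ antidiagonal ℓ,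
      (firstPassage (-1) p.1 true : ℤ) * firstPassage (-1) p.2 false := by
  have := eq_sum_firstPassage_mul (X := fun ℓ s j => (firstPassage j ℓ s : ℤ)) (R := {j | j < -1})
    (-1) (fun m s j hj => by simp [firstPassage_succ (show j ≠ 0 by simp at hj; omega)])
    (fun s j hj => by simp [firstPassage_zero_right (show j ≠ 0 by simp at hj; omega)])
    (fun j hj s b => by have := pairScore_le_one s b; simp at hj ⊢; omega) ℓ true (-2) (by simp)
  simpa [passageEnd] using this

lemma firstPassage_two (ℓ : ℕ) :
    (firstPassage 2 ℓ false : ℤ) = ∑ p ∈ antidiagonal ℓ,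
      (firstPassage 1 p.1 false : ℤ) * firstPassage 1 p.2 true := by
  have := eq_sum_firstPassage_mul (X := fun ℓ s j => (firstPassage j ℓ s : ℤ)) (R := {j | 1 < j})
    1 (fun m s j hj => by simp [firstPassage_succ (show j ≠ 0 by simp at hj; omega)])
    (fun s j hj => by simp [firstPassage_zero_right (show j ≠ 0 by simp at hj; omega)])
    (fun j hj s b => by have := neg_one_le_pairScore s b; simp at hj ⊢; omega) ℓ false 2 (by simp)
  simpa [passageEnd] using this

theorem firstPassage_neg_one (ℓ : ℕ) (s : Bool) :
    firstPassage (-1) ℓ s = firstPassage 1 ℓ s := by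
  induction ℓ using Nat.strong_induction_on generalizing s with
  | _ ℓ ih =>
  cases ℓ with
  | zero => simp [firstPassage]
  | succ ℓ =>
    cases s with
    | false =>
      rw [firstPassage_false_succ (by norm_num), firstPassage_false_succ one_ne_zero,
        ih ℓ (by omega), ih ℓ (by omega)]
    | true =>
      have hconv : ∑ p ∈ antidiagonal ℓ,
            (firstPassage (-1) p.1 true : ℤ) * firstPassage (-1) p.2 false
          = ∑ p ∈ antidiagonal ℓ, (firstPassage 1 p.1 false : ℤ) * firstPassage 1 p.2 true := by
        rw [← Nat.sum_antidiagonal_swap]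
        refine sum_congr rfl fun p hp => ?_
        have hp := mem_antidiagonal.1 hp
        rw [Prod.fst_swap, Prod.snd_swap, ih p.2 (by omega), ih p.1 (by omega), mul_comm]
      have h : (firstPassage (-1) (ℓ + 1) true : ℤ) = firstPassage 1 (ℓ + 1) true := by
        rw [firstPassage_succ (by norm_num), firstPassage_succ one_ne_zero]
        simp only [Fintype.sum_bool, pairScore, if_true]
        norm_num [firstPassage_neg_two, firstPassage_two, hconv, firstPassage_zero_left]
        ring
      exact_mod_cast h

lemma sum_firstPassage_sub_mul_pow {d : ℤ} (hd : d ≠ 0) (m : ℕ) :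
    ∑ p ∈ antidiagonal m, ((firstPassage d p.1 true : ℤ) - firstPassage d p.1 false) * 2 ^ p.2
      = firstPassage d (m + 1) false := by
  induction m with
  | zero => simp [firstPassage_false_succ hd, firstPassage_zero_right hd]
  | succ m ih =>
    rw [Nat.sum_antidiagonal_succ', firstPassage_false_succ hd (m + 1)]
    simp_rw [pow_succ, ← mul_assoc, ← sum_mul, ih, firstPassage_false_succ hd m]
    push_cast
    ring

def nonnegSign (d : ℤ) : ℤ := if 0 ≤ d then 1 else -1

def margin (m : ℕ) (s : Bool) : ℤ := walkSum nonnegSign m s 0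

lemma margin_false_succ (m : ℕ) : margin (m + 1) false = margin m true + margin m false := by
  simp [margin, walkSum_succ, pairScore]

lemma walkSum_nonnegSign_neg_one (m : ℕ) :
    walkSum nonnegSign m true (-1) = ∑ p ∈ antidiagonal m,
      (firstPassage (-1) p.1 true : ℤ) * (2 ^ p.2 + margin p.2 false) - 2 ^ m := by
  have := eq_sum_firstPassage_mul (X := walkSum fun d => 1 + nonnegSign d) (R := {j | j < 0}) 0
    (fun m s j _ => walkSum_succ _ m s j)
    (fun s j hj => by simp at hj; simp [walkSum_zero, nonnegSign, not_le.2 hj])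
    (fun j hj s b => by have := pairScore_le_one s b; simp at hj ⊢; omega) m true (-1) (by simp)
  norm_num [walkSum_one_add, passageEnd] at this
  simp only [margin]
  linarith

lemma walkSum_nonnegSign_one (m : ℕ) :
    walkSum nonnegSign m false 1 = 2 ^ m - ∑ p ∈ antidiagonal m,
      (firstPassage 1 p.1 false : ℤ) * (2 ^ p.2 - margin p.2 true) := by
  have := eq_sum_firstPassage_mul (X := walkSum fun d => 1 - nonnegSign d) (R := {j | 0 < j}) 0
    (fun m s j _ => walkSum_succ _ m s j)
    (fun s j hj => by simp at hj; simp [walkSum_zero, nonnegSign, hj.le])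
    (fun j hj s b => by have := neg_one_le_pairScore s b; simp at hj ⊢; omega) m false 1 (by simp)
  norm_num [walkSum_one_sub, passageEnd] at this
  simp only [margin]
  linarith

theorem margin_true_succ (m : ℕ) :
    margin (m + 1) true = ∑ p ∈ antidiagonal m, (firstPassage (-1) p.1 true : ℤ) * margin p.2 false
      + ∑ p ∈ antidiagonal m, (firstPassage 1 p.1 false : ℤ) * margin p.2 true
      + firstPassage 1 (m + 1) false := by
  rw [margin, walkSum_succ, Fintype.sum_bool]
  norm_num [pairScore, walkSum_nonnegSign_neg_one, walkSum_nonnegSign_one,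
    ← sum_firstPassage_sub_mul_pow one_ne_zero, firstPassage_neg_one, mul_add, mul_sub,
    sum_add_distrib, sum_sub_distrib, sub_mul]
  ring

theorem margin_nonneg (m : ℕ) (s : Bool) : 0 ≤ margin m s := by
  induction m using Nat.strong_induction_on generalizing s with
  | _ m ih =>
  cases m with
  | zero => simp [margin, walkSum_zero, nonnegSign]
  | succ m =>
    have ih' : ∀ p ∈ antidiagonal m, ∀ s, 0 ≤ margin p.2 s := fun p hp s =>
      ih p.2 (by have := mem_antidiagonal.1 hp; omega) s
    cases s with
    | false => rw [margin_false_succ]; linarith [ih m (by omega) true, ih m (by omega) false]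
    | true =>
      rw [margin_true_succ]
      refine add_nonneg (add_nonneg ?_ ?_) (Nat.cast_nonneg _) <;>
        exact sum_nonneg fun p hp => mul_nonneg (Nat.cast_nonneg _) (ih' p hp _)

lemma two_le_margin (m : ℕ) : 2 ≤ margin (m + 1) false := by
  induction m with
  | zero => rw [margin_false_succ]; simp [margin, walkSum_zero, nonnegSign]
  | succ m ih => rw [margin_false_succ]; linarith [margin_nonneg (m + 1) true]

lemma two_mul_card_lead_neg (m : ℕ) (s : Bool) :
    2 * (#{w : Fin m → Bool | lead s w < 0} : ℤ) = 2 ^ m - margin m s := by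
  simp only [margin, walkSum, nonnegSign, zero_add, card_filter]
  push_cast
  rw [mul_sum, eq_sub_iff_add_eq, ← sum_add_distrib]
  rw [sum_congr rfl fun w _ => show (2 * (if lead s w < 0 then 1 else 0) +
    if 0 ≤ lead s w then 1 else -1 : ℤ) = 1 by split_ifs <;> omega]
  simp

end LittGame

open LittGame

theorem stmt19 (n : ℕ) (hn : 2 ≤ n) :
    ((Finset.univ.filter (fun w : Fin n → Bool =>
        cnt w true false < cnt w true true)).card : ℚ) / 2 ^ n
      ≤ 1 / 2 - 1 / 2 ^ n := by
  obtain ⟨m, rfl⟩ : ∃ m, n = m + 1 := ⟨n - 1, by omega⟩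
  have hset : univ.filter (fun w : Fin (m + 1) → Bool => cnt w true false < cnt w true true)
      = univ.filter (fun w : Fin (m + 1) → Bool => lead false w < 0) := by
    refine filter_congr fun w _ => ?_
    have := cnt_sub_cnt_eq_lead w
    simp only [lead, pairScore, Bool.false_eq_true, if_false, zero_add]
    omega
  have hcard : (#{w : Fin (m + 1) → Bool | lead false w < 0} : ℚ) ≤ 2 ^ m - 1 := by
    have h2 := two_mul_card_lead_neg (m + 1) false
    have := two_le_margin m
    rw [pow_succ] at h2
    exact_mod_cast (by linarith : (#{w : Fin (m + 1) → Bool | lead false w < 0} : ℤ) ≤ 2 ^ m - 1)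
  rw [hset, div_le_iff₀ (by positivity)]
  field_simp
  rw [pow_succ]
  linarith
end
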